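/- Let Γ = (G, σ) be a balanced signed graph on n vertices and let F_k(Γ) be its k-token signed graph for some k with 1 ≤ k ≤ n−1. Let L_1 and L_k be the Laplacian matrices of Γ and F_k(Γ), respectively, and let B⁺ be the (n; 1, k)-binomial matrix (rows indexed by k-subsets of the vertex set, columns by vertices, entry 1 exactly when the vertex lies in the subset). Then there exist diagonal ±1 matrices S_1 (of size n × n) and S_k (of size C(n,k) × C(n,k)) such that the signed binomial matrix B = S_k B⁺ S_1 satisfies B L_1 = L_k B. -/

import Mathlib

open scoped Classical

/-- A signed graph: a simple graph together with a signature assigning a sign `±1`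
(an element of `ℤˣ`) to each pair of vertices (only the values on edges are relevant). -/
structure SignedGraph (V : Type*) where
  G : SimpleGraph V
  sign : V → V → ℤˣ
  sign_symm : ∀ u v, sign u v = sign v u

namespace SignedGraph

variable {V W : Type*}

/-- The sign function, as a function on unordered pairs. -/
def esign (Γ : SignedGraph V) : Sym2 V → ℤˣ :=
  Sym2.lift ⟨Γ.sign, Γ.sign_symm⟩

/-- The sign of a walk: the product of the signs of its edges. -/
def walkSign (Γ : SignedGraph V) {u v : V} (p : Γ.G.Walk u v) : ℤˣ :=
  (p.edges.map Γ.esign).prod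

/-- A signed graph is balanced if every cycle is positive. -/
def Balanced (Γ : SignedGraph V) : Prop :=
  ∀ ⦃u : V⦄ (p : Γ.G.Walk u u), p.IsCycle → Γ.walkSign p = 1

/-- Switching at a vertex subset `U`: reverse the sign of every edge with exactly one
endpoint in `U`. -/
noncomputable def switch (Γ : SignedGraph V) (U : Set V) : SignedGraph V where
  G := Γ.G
  sign u v := (if u ∈ U then (-1 : ℤˣ) else 1) * (if v ∈ U then (-1 : ℤˣ) else 1) * Γ.sign u v
  sign_symm u v := by
    try dsimp only
    rw [Γ.sign_symm u v, mul_comm (if u ∈ U then (-1 : ℤˣ) else 1) (if v ∈ U then (-1 : ℤˣ) else 1)]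

/-- Two signed graphs on the same vertex set are "the same signed graph" when they have the
same underlying graph and the same signature on every edge. -/
def SEq (Γ Γ' : SignedGraph V) : Prop :=
  Γ.G = Γ'.G ∧ ∀ u v, Γ.G.Adj u v → Γ.sign u v = Γ'.sign u v

/-- Switching equivalence of two signed graphs on the same vertex set. -/
def SwitchEquiv (Γ Γ' : SignedGraph V) : Prop :=
  ∃ U : Set V, (Γ.switch U).SEq Γ'

/-- A sign-preserving isomorphism of signed graphs. -/
structure Iso (Γ : SignedGraph V) (Γ' : SignedGraph W) where
  toEquiv : V ≃ W
  adj_iff : ∀ u v, Γ.G.Adj u v ↔ Γ'.G.Adj (toEquiv u) (toEquiv v)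
  sign_eq : ∀ u v, Γ.G.Adj u v → Γ.sign u v = Γ'.sign (toEquiv u) (toEquiv v)

/-- Switching isomorphism: `Γ'` is isomorphic to a switching of `Γ`. -/
def SwitchIso (Γ : SignedGraph V) (Γ' : SignedGraph W) : Prop :=
  ∃ U : Set V, Nonempty ((Γ.switch U).Iso Γ')

/-- The negation of a signed graph: all edge signs reversed. -/
def neg (Γ : SignedGraph V) : SignedGraph V where
  G := Γ.G
  sign u v := -Γ.sign u v
  sign_symm u v := by (try dsimp only); rw [Γ.sign_symm]

variable [DecidableEq V]

/-- The underlying graph of the `k`-token graph: vertices are the `k`-subsets of `V`,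
with `A ~ B` when `A Δ B = {a, b}`, `a ∈ A`, `b ∈ B` and `a ~ b` in `G`. -/
def tokenAdj (G : SimpleGraph V) (k : ℕ) : SimpleGraph {A : Finset V // A.card = k} where
  Adj A B := ∃ a b, a ∈ A.1 ∧ b ∈ B.1 ∧ G.Adj a b ∧ symmDiff A.1 B.1 = {a, b}
  symm := by
    refine ⟨?_⟩
    rintro A B ⟨a, b, ha, hb, hab, hs⟩
    exact ⟨b, a, hb, ha, hab.symm, by rw [symmDiff_comm, hs, Finset.pair_comm]⟩
  loopless := by
    refine ⟨?_⟩
    rintro A ⟨a, b, ha, hb, hab, hs⟩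
    rw [symmDiff_self] at hs
    have h : a ∈ ({a, b} : Finset V) := Finset.mem_insert_self a {b}
    rw [← hs] at h
    simp at h

/-- The `k`-token signed graph: the edge obtained by moving a token along `ab`
carries the sign of `ab`. -/
def token (Γ : SignedGraph V) (k : ℕ) : SignedGraph {A : Finset V // A.card = k} where
  G := tokenAdj Γ.G k
  sign A B := ∏ a ∈ A.1 \ B.1, ∏ b ∈ B.1 \ A.1, Γ.sign a b
  sign_symm A B := by
    try dsimp only
    rw [Finset.prod_comm]
    exact Finset.prod_congr rfl fun b _ => Finset.prod_congr rfl fun a _ => Γ.sign_symm a b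

/-- The signed adjacency matrix (over `ℝ`). -/
noncomputable def adjMatrix (Γ : SignedGraph V) [Fintype V] : Matrix V V ℝ :=
  Matrix.of fun u v => if Γ.G.Adj u v then ((Γ.sign u v : ℤ) : ℝ) else 0

/-- The signed Laplacian matrix `L = D - A` (over `ℝ`). -/
noncomputable def lapMatrix (Γ : SignedGraph V) [Fintype V] : Matrix V V ℝ :=
  Matrix.diagonal (fun v => (Γ.G.degree v : ℝ)) - Γ.adjMatrix

/-- The quantity `ℓ_m(Γ)`. -/
noncomputable def ellm (Γ : SignedGraph V) [Fintype V] (m : ℕ) : ℝ :=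
  (∑ r ∈ Finset.range (m + 1),
      ((Γ.G.adjMatrix ℝ ^ r).trace - (Γ.adjMatrix ^ r).trace)) /
  (∑ r ∈ Finset.range (m + 1),
      ((Γ.G.adjMatrix ℝ ^ r).trace + |(Γ.adjMatrix ^ r).trace|))

/-- The unbalance level `ℓ(Γ) = max {ℓ_{n-1}(Γ), ℓ_n(Γ)}`. -/
noncomputable def unbalanceLevel (Γ : SignedGraph V) [Fintype V] : ℝ :=
  max (Γ.ellm (Fintype.card V - 1)) (Γ.ellm (Fintype.card V))

/-- The frustration index: the minimum number of negative edges whose deletion yields a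
balanced signed graph. -/
noncomputable def frustrationIndex (Γ : SignedGraph V) : ℕ :=
  sInf {m : ℕ | ∃ F : Finset (Sym2 V), F.card = m ∧ ↑F ⊆ Γ.G.edgeSet ∧
    (∀ e ∈ F, Γ.esign e = -1) ∧
    Balanced ⟨Γ.G.deleteEdges ↑F, Γ.sign, Γ.sign_symm⟩}

/-- The signed complement of a balanced signed graph, with respect to a switching function
`s` witnessing balance (`A_σ = S A S`): the signed graph on the complement graph with
adjacency matrix `S Ā S`, i.e. with sign `s u * s v` on each complement edge. -/
def scompl (Γ : SignedGraph V) (s : V → ℤˣ) : SignedGraph V where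
  G := Γ.Gᶜ
  sign u v := s u * s v
  sign_symm u v := mul_comm _ _

/-- The real diagonal `±1` matrix associated with `s : V → ℤˣ`. -/
noncomputable def diagS [Fintype V] (s : V → ℤˣ) : Matrix V V ℝ :=
  Matrix.diagonal fun v => ((s v : ℤ) : ℝ)

end SignedGraph

/-- The all-positive signed complete graph on `V`. -/
def allPos (V : Type*) : SignedGraph V := ⟨⊤, fun _ _ => 1, fun _ _ => rfl⟩

/-- The `(n; 1, k)`-binomial matrix. -/
noncomputable def binomB (V : Type*) [Fintype V] [DecidableEq V] (k : ℕ) :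
    Matrix {A : Finset V // A.card = k} V ℝ :=
  Matrix.of fun A v => if v ∈ A.1 then 1 else 0

/-- The `(n; k₁, k₂)`-binomial matrix. -/
noncomputable def binomB2 (V : Type*) [Fintype V] [DecidableEq V] (k₁ k₂ : ℕ) :
    Matrix {A : Finset V // A.card = k₂} {A : Finset V // A.card = k₁} ℝ :=
  Matrix.of fun A X => if X.1 ⊆ A.1 then 1 else 0


/-! Balance yields a switching function `s : V → ℤˣ` with `σ(uv) = s u * s v`: take for `s v`
the sign of any walk from a fixed root of the component of `v`. This is well defined because
every closed walk is positive, as its bypass peels off positive cycles and backtracks.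
Then `L(Γ) = S L(G) S`, and with `s_k(A) = ∏_{v ∈ A} s v` also `L(F_k(Γ)) = S_k L(F_k(G)) S_k`,
which reduces the claim to the unsigned identity `B⁺ L(G) = L(F_k(G)) B⁺`. Applied to
`f : V → ℝ` at a `k`-set `A`, both sides of the latter equal `∑ (f a - f b)` over the edges `ab`
with `a ∈ A`, `b ∉ A`: the terms of the edges inside `A` cancel in pairs. -/

lemma Int.cast_units_eq_one_or (u : ℤˣ) : ((u : ℤ) : ℝ) = 1 ∨ ((u : ℤ) : ℝ) = -1 := by
  rcases Int.units_eq_one_or u with rfl | rfl <;> simp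

namespace Finset

lemma sum_sum_eq_zero_of_antisymm {ι M : Type*} [AddCommGroup M] [IsAddTorsionFree M]
    (s : Finset ι) (F : ι → ι → M) (hF : ∀ i j, F j i = -F i j) :
    ∑ i ∈ s, ∑ j ∈ s, F i j = 0 := by
  refine self_eq_neg.1 ?_
  rw [← sum_neg_distrib]
  conv_lhs => rw [sum_comm]
  refine sum_congr rfl fun i _ => ?_
  rw [← sum_neg_distrib]
  exact sum_congr rfl fun j _ => hF i j

variable {V : Type*} [DecidableEq V] {A B : Finset V} {a b : V}

lemma sdiff_eq_singleton_of_symmDiff_eq_pair (h : symmDiff A B = {a, b}) (ha : a ∈ A)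
    (hb : b ∈ B) : A \ B = {a} := by
  ext x
  have hx := congrArg (x ∈ ·) h
  simp only [mem_symmDiff, mem_insert, mem_singleton, eq_iff_iff] at hx
  simp only [mem_sdiff, mem_singleton]
  grind

lemma eq_insert_erase_of_symmDiff_eq_pair (h : symmDiff A B = {a, b}) (ha : a ∈ A)
    (hb : b ∈ B) : B = insert b (A.erase a) := by
  ext x
  have hx := congrArg (x ∈ ·) h
  simp only [mem_symmDiff, mem_insert, mem_singleton, eq_iff_iff] at hx
  simp only [mem_insert, mem_erase]
  grind

lemma symmDiff_insert_erase (ha : a ∈ A) (hb : b ∉ A) :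
    symmDiff A (insert b (A.erase a)) = {a, b} := by
  ext x
  simp only [mem_symmDiff, mem_insert, mem_erase, mem_singleton]
  grind

lemma card_insert_erase (ha : a ∈ A) (hb : b ∉ A) : (insert b (A.erase a)).card = A.card := by
  rw [card_insert_of_notMem (fun h => hb (mem_of_mem_erase h)), card_erase_add_one ha]

lemma prod_mul_prod_eq_prod_symmDiff (s : V → ℤˣ) (A B : Finset V) :
    (∏ v ∈ A, s v) * ∏ v ∈ B, s v = ∏ v ∈ symmDiff A B, s v := by
  rw [symmDiff_def, sup_eq_union, prod_union disjoint_sdiff_sdiff,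
    ← prod_inter_mul_prod_sdiff A B, ← prod_inter_mul_prod_sdiff B A, inter_comm,
    mul_mul_mul_comm, ← prod_mul_distrib]
  simp [Int.units_mul_self]

end Finset

namespace SimpleGraph

open Finset Matrix

variable {V : Type*} [Fintype V] [DecidableEq V] (G : SimpleGraph V) [DecidableRel G.Adj]

lemma lapMatrix_mulVec_apply_eq_sum {R : Type*} [NonAssocRing R] (x : V → R) (v : V) :
    (G.lapMatrix R *ᵥ x) v = ∑ w ∈ G.neighborFinset v, (x v - x w) := by
  rw [lapMatrix_mulVec_apply, sum_sub_distrib, sum_const, card_neighborFinset_eq_degree,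
    nsmul_eq_mul]

lemma sum_sum_neighborFinset_mem_sub_eq_zero (A : Finset V) (f : V → ℝ) :
    ∑ v ∈ A, ∑ w ∈ G.neighborFinset v with w ∈ A, (f v - f w) = 0 := by
  have hfilter : ∀ v, {w ∈ G.neighborFinset v | w ∈ A} = {w ∈ A | G.Adj v w} := fun v => by
    ext w
    simp [and_comm]
  simp_rw [hfilter, sum_filter]
  refine sum_sum_eq_zero_of_antisymm A _ fun v w => ?_
  simp only [G.adj_comm w v]
  split_ifs <;> ring

end SimpleGraph

namespace SignedGraph

open Finset Matrix SimpleGraph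

variable {V : Type*}

section Walks

variable (Γ : SignedGraph V)

@[simp]
lemma walkSign_nil {u : V} : Γ.walkSign (Walk.nil : Γ.G.Walk u u) = 1 := rfl

@[simp]
lemma walkSign_cons {u v w : V} (h : Γ.G.Adj u v) (p : Γ.G.Walk v w) :
    Γ.walkSign (Walk.cons h p) = Γ.sign u v * Γ.walkSign p := by
  simp [walkSign, esign]

@[simp]
lemma walkSign_append {u v w : V} (p : Γ.G.Walk u v) (q : Γ.G.Walk v w) :
    Γ.walkSign (p.append q) = Γ.walkSign p * Γ.walkSign q := by
  simp [walkSign]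

@[simp]
lemma walkSign_reverse {u v : V} (p : Γ.G.Walk u v) : Γ.walkSign p.reverse = Γ.walkSign p := by
  simp [walkSign, List.prod_reverse]

@[simp]
lemma walkSign_copy {u v u' v' : V} (p : Γ.G.Walk u v) (hu : u = u') (hv : v = v') :
    Γ.walkSign (p.copy hu hv) = Γ.walkSign p := by
  subst hu hv
  rfl

end Walks

namespace Balanced

variable {Γ : SignedGraph V}

lemma walkSign_cons_of_isPath (hbal : Γ.Balanced) {u v : V} (h : Γ.G.Adj u v)
    {q : Γ.G.Walk v u} (hq : q.IsPath) : Γ.walkSign (Walk.cons h q) = 1 := by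
  by_cases he : s(u, v) ∈ q.edges
  · rw [hq.eq_adj_toWalk_of_mem_edges (Sym2.eq_swap ▸ he)]
    simp [Γ.sign_symm v u, Int.units_mul_self]
  · exact hbal _ ((Walk.cons_isCycle_iff q h).2 ⟨hq, he⟩)

lemma walkSign_bypass [DecidableEq V] (hbal : Γ.Balanced) {u v : V} (p : Γ.G.Walk u v) :
    Γ.walkSign p.bypass = Γ.walkSign p := by
  induction p with
  | nil => rfl
  | cons h p ih =>
    rw [Walk.bypass]
    split_ifs with hs
    · have hsplit := congrArg Γ.walkSign (p.bypass.take_spec hs)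
      rw [walkSign_append] at hsplit
      rw [walkSign_cons, ← ih, ← hsplit, ← mul_assoc, ← walkSign_cons _ h,
        hbal.walkSign_cons_of_isPath h (p.bypass_isPath.takeUntil hs), one_mul]
    · rw [walkSign_cons, walkSign_cons, ih]

lemma walkSign_eq_one (hbal : Γ.Balanced) {u : V} (p : Γ.G.Walk u u) : Γ.walkSign p = 1 := by
  classical
  rw [← hbal.walkSign_bypass, (Walk.isPath_iff_nil.1 p.bypass_isPath).eq_nil, walkSign_nil]

lemma walkSign_eq (hbal : Γ.Balanced) {u v : V} (p q : Γ.G.Walk u v) :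
    Γ.walkSign p = Γ.walkSign q := by
  have hpq := hbal.walkSign_eq_one (p.append q.reverse)
  rw [walkSign_append, walkSign_reverse] at hpq
  calc Γ.walkSign p = Γ.walkSign p * (Γ.walkSign q * Γ.walkSign q) := by
        rw [Int.units_mul_self, mul_one]
    _ = Γ.walkSign q := by rw [← mul_assoc, hpq, one_mul]

lemma exists_sign_eq_mul (hbal : Γ.Balanced) :
    ∃ s : V → ℤˣ, ∀ u v, Γ.G.Adj u v → Γ.sign u v = s u * s v := by
  have hreach : ∀ v, Γ.G.Reachable (Γ.G.connectedComponentMk v).out v :=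
    fun v => ConnectedComponent.exact (Γ.G.connectedComponentMk v).out_eq
  refine ⟨fun v => Γ.walkSign (hreach v).some, fun u v h => ?_⟩
  have hroot : (Γ.G.connectedComponentMk u).out = (Γ.G.connectedComponentMk v).out := by
    rw [ConnectedComponent.sound h.reachable]
  have hv := hbal.walkSign_eq (hreach v).some (((hreach u).some.concat h).copy hroot rfl)
  rw [walkSign_copy, Walk.concat_eq_append, walkSign_append, walkSign_cons, walkSign_nil,
    mul_one] at hv
  dsimp only
  rw [hv, ← mul_assoc, Int.units_mul_self, one_mul]

end Balanced

variable [Fintype V] [DecidableEq V]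

lemma diagS_mul_diagS_self (s : V → ℤˣ) : diagS s * diagS s = 1 := by
  simp [diagS, Matrix.diagonal_mul_diagonal, ← Int.cast_mul, ← Units.val_mul, Int.units_mul_self]

lemma diagS_mul_diagS_mul {W : Type*} (s : V → ℤˣ) (M : Matrix V W ℝ) :
    diagS s * (diagS s * M) = M := by
  rw [← Matrix.mul_assoc, diagS_mul_diagS_self, Matrix.one_mul]

lemma lapMatrix_eq_diagS_mul {Γ : SignedGraph V} {s : V → ℤˣ}
    (hs : ∀ u v, Γ.G.Adj u v → Γ.sign u v = s u * s v) :
    Γ.lapMatrix = diagS s * Γ.G.lapMatrix ℝ * diagS s := by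
  ext u v
  simp only [lapMatrix, adjMatrix, diagS, SimpleGraph.lapMatrix, degMatrix, diagonal_mul,
    mul_diagonal, Matrix.sub_apply, diagonal_apply, of_apply, SimpleGraph.adjMatrix_apply]
  by_cases huv : u = v
  · subst huv
    simp [mul_comm, ← mul_assoc, ← Int.cast_mul, ← Units.val_mul, Int.units_mul_self]
  · by_cases hadj : Γ.G.Adj u v
    · simp [huv, hadj, hs u v hadj]
    · simp [huv, hadj]

lemma token_sign_eq_mul {Γ : SignedGraph V} {s : V → ℤˣ}
    (hs : ∀ u v, Γ.G.Adj u v → Γ.sign u v = s u * s v) (k : ℕ)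
    {A B : {A : Finset V // A.card = k}} (hAB : (Γ.token k).G.Adj A B) :
    (Γ.token k).sign A B = (∏ v ∈ A.1, s v) * ∏ v ∈ B.1, s v := by
  obtain ⟨a, b, ha, hb, hab, hsymm⟩ := hAB
  have hBA : symmDiff B.1 A.1 = {b, a} := by rw [symmDiff_comm, hsymm, pair_comm]
  simp only [token, sdiff_eq_singleton_of_symmDiff_eq_pair hsymm ha hb,
    sdiff_eq_singleton_of_symmDiff_eq_pair hBA hb ha, prod_singleton,
    prod_mul_prod_eq_prod_symmDiff, hsymm, prod_pair hab.ne, hs a b hab]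

lemma sum_neighborFinset_tokenAdj {M : Type*} [AddCommMonoid M] (G : SimpleGraph V)
    (k : ℕ) (A : {A : Finset V // A.card = k}) (g : Finset V → M) :
    ∑ B ∈ (tokenAdj G k).neighborFinset A, g B.1
      = ∑ a ∈ A.1, ∑ b ∈ G.neighborFinset a with b ∉ A.1, g (insert b (A.1.erase a)) := by
  rw [sum_sigma']
  have hmem : ∀ x ∈ A.1.sigma fun a => {b ∈ G.neighborFinset a | b ∉ A.1},
      x.1 ∈ A.1 ∧ G.Adj x.1 x.2 ∧ x.2 ∉ A.1 := by
    simp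
  refine (sum_bij (fun x hx => ⟨insert x.2 (A.1.erase x.1),
    (card_insert_erase (hmem x hx).1 (hmem x hx).2.2).trans A.2⟩) ?_ ?_ ?_
    fun _ _ => rfl).symm
  · intro x hx
    obtain ⟨ha, hab, hb⟩ := hmem x hx
    rw [mem_neighborFinset]
    exact ⟨x.1, x.2, ha, mem_insert_self _ _, hab, symmDiff_insert_erase ha hb⟩
  · intro x hx y hy hxy
    obtain ⟨ha, -, hb⟩ := hmem x hx
    obtain ⟨ha', -, hb'⟩ := hmem y hy
    have h := congrArg Subtype.val hxy
    dsimp only at h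
    have hx1 := congrArg (x.1 ∈ ·) h
    have hy1 := congrArg (y.1 ∈ ·) h
    have hx2 := congrArg (x.2 ∈ ·) h
    simp only [mem_insert, mem_erase, eq_iff_iff] at hx1 hy1 hx2
    have h1 : x.1 = y.1 := by grind
    have h2 : x.2 = y.2 := by grind
    exact Sigma.ext h1 (heq_of_eq h2)
  · intro B hB
    obtain ⟨a, b, ha, hb, hab, hsymm⟩ := (mem_neighborFinset _ _ _).1 hB
    have hbA : b ∉ A.1 := by
      have hBA : symmDiff B.1 A.1 = {b, a} := by rw [symmDiff_comm, hsymm, pair_comm]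
      exact (mem_sdiff.1 ((sdiff_eq_singleton_of_symmDiff_eq_pair hBA hb ha).ge
        (mem_singleton_self b))).2
    refine ⟨⟨a, b⟩, by simp [ha, hab, hbA], Subtype.ext ?_⟩
    exact (eq_insert_erase_of_symmDiff_eq_pair hsymm ha hb).symm

lemma binomB_mulVec_apply (k : ℕ) (f : V → ℝ) (A : {A : Finset V // A.card = k}) :
    (binomB V k *ᵥ f) A = ∑ v ∈ A.1, f v := by
  simp [binomB, mulVec, dotProduct]

theorem binomB_mul_lapMatrix (G : SimpleGraph V) (k : ℕ) :
    binomB V k * G.lapMatrix ℝ = (tokenAdj G k).lapMatrix ℝ * binomB V k := by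
  refine ext_iff_mulVec.2 fun f => funext fun A => ?_
  rw [← mulVec_mulVec, ← mulVec_mulVec]
  calc (binomB V k *ᵥ (G.lapMatrix ℝ *ᵥ f)) A
      = ∑ v ∈ A.1, (∑ w ∈ G.neighborFinset v with w ∈ A.1, (f v - f w)
          + ∑ w ∈ G.neighborFinset v with w ∉ A.1, (f v - f w)) := by
        rw [binomB_mulVec_apply]
        exact sum_congr rfl fun v _ => by
          rw [lapMatrix_mulVec_apply_eq_sum, sum_filter_add_sum_filter_not]
    _ = ∑ a ∈ A.1, ∑ b ∈ G.neighborFinset a with b ∉ A.1,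
          (∑ v ∈ A.1, f v - ∑ v ∈ insert b (A.1.erase a), f v) := by
        rw [sum_add_distrib, sum_sum_neighborFinset_mem_sub_eq_zero, zero_add]
        refine sum_congr rfl fun a ha => sum_congr rfl fun b hb => ?_
        have hbA : b ∉ A.1 := (mem_filter.1 hb).2
        rw [sum_insert fun h => hbA (mem_of_mem_erase h), sum_erase_eq_sub ha]
        ring
    _ = ((tokenAdj G k).lapMatrix ℝ *ᵥ (binomB V k *ᵥ f)) A := by
        rw [lapMatrix_mulVec_apply_eq_sum]
        simp only [binomB_mulVec_apply]
        exact (sum_neighborFinset_tokenAdj G k A fun S => ∑ v ∈ A.1, f v - ∑ v ∈ S, f v).symm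

end SignedGraph

theorem signed_binomial_commutes_general {V : Type*} [Fintype V] [DecidableEq V] (k : ℕ)
    (Γ : SignedGraph V) (hbal : Γ.Balanced) :
    ∃ (s1 : V → ℝ) (sk : {A : Finset V // A.card = k} → ℝ),
      (∀ v, s1 v = 1 ∨ s1 v = -1) ∧ (∀ A, sk A = 1 ∨ sk A = -1) ∧
      Matrix.diagonal sk * binomB V k * Matrix.diagonal s1 * Γ.lapMatrix
        = (Γ.token k).lapMatrix * (Matrix.diagonal sk * binomB V k * Matrix.diagonal s1) := by
  obtain ⟨s, hs⟩ := hbal.exists_sign_eq_mul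
  let t : {A : Finset V // A.card = k} → ℤˣ := fun A => ∏ v ∈ A.1, s v
  refine ⟨fun v => ((s v : ℤ) : ℝ), fun A => ((t A : ℤ) : ℝ),
    fun v => Int.cast_units_eq_one_or (s v), fun A => Int.cast_units_eq_one_or (t A), ?_⟩
  change SignedGraph.diagS t * binomB V k * SignedGraph.diagS s * Γ.lapMatrix
    = (Γ.token k).lapMatrix * (SignedGraph.diagS t * binomB V k * SignedGraph.diagS s)
  rw [SignedGraph.lapMatrix_eq_diagS_mul hs,
    SignedGraph.lapMatrix_eq_diagS_mul (s := t) fun _ _ => SignedGraph.token_sign_eq_mul hs k]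
  simp only [Matrix.mul_assoc, SignedGraph.diagS_mul_diagS_mul]
  rw [← Matrix.mul_assoc (binomB V k), SignedGraph.binomB_mul_lapMatrix, Matrix.mul_assoc]
  rfl

/-- for a balanced signed graph there is a signed binomial matrix
`B = S_k B⁺ S_1` with `B L_1 = L_k B`. -/
theorem signed_binomial_commutes {V : Type*} [Fintype V] [DecidableEq V] (n k : ℕ)
    (hn : Fintype.card V = n) (hk1 : 1 ≤ k) (hk2 : k ≤ n - 1)
    (Γ : SignedGraph V) (hbal : Γ.Balanced) :
    ∃ (s1 : V → ℝ) (sk : {A : Finset V // A.card = k} → ℝ),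
      (∀ v, s1 v = 1 ∨ s1 v = -1) ∧ (∀ A, sk A = 1 ∨ sk A = -1) ∧
      Matrix.diagonal sk * binomB V k * Matrix.diagonal s1 * Γ.lapMatrix
        = (Γ.token k).lapMatrix * (Matrix.diagonal sk * binomB V k * Matrix.diagonal s1) :=
  signed_binomial_commutes_general k Γ hbal
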